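/- arXiv:2409.06378 — 3 statements merged into one kernel-verified Lean document; each statement's English description precedes it below -/
import Mathlib

section
/- Let v, w be continuous functions on R × [0,T] with supp(v), supp(w) ⊆ {(x,t) : |x| ≤ t + R} for some R ≥ 1, and let p, q ≥ 0. Then there is a constant C > 0, independent of T and ε, such that ‖L'(|v|^p |w|^q)‖_∞ ≤ C ‖v‖_∞^p ‖w‖_∞^q (T + R), where ‖·‖_∞ denotes the sup norm on R × [0,T]. -/
open Set

theorem apriori_L' (R p q : ℝ) (hR : 1 ≤ R) (hp : 0 ≤ p) (hq : 0 ≤ q) :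
    ∃ C > (0:ℝ), ∀ T ≥ (0:ℝ), ∀ v w : ℝ → ℝ → ℝ, ∀ Mv Mw : ℝ,
      Continuous (Function.uncurry v) → Continuous (Function.uncurry w) →
      (∀ x : ℝ, ∀ t ∈ Icc (0:ℝ) T, t + R < |x| → v x t = 0) →
      (∀ x : ℝ, ∀ t ∈ Icc (0:ℝ) T, t + R < |x| → w x t = 0) →
      (∀ x : ℝ, ∀ t ∈ Icc (0:ℝ) T, |v x t| ≤ Mv) →
      (∀ x : ℝ, ∀ t ∈ Icc (0:ℝ) T, |w x t| ≤ Mw) →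
      ∀ x : ℝ, ∀ t ∈ Icc (0:ℝ) T,
        |(1/2 : ℝ) * ∫ s in (0:ℝ)..t,
            (|v (x + t - s) s| ^ p * |w (x + t - s) s| ^ q
              + |v (x - t + s) s| ^ p * |w (x - t + s) s| ^ q)|
          ≤ C * Mv ^ p * Mw ^ q * (T + R) := by
  refine ⟨1, one_pos, ?_⟩
  intro T hT v w Mv Mw _ _ _ _ hv hw x t ht
  obtain ⟨ht0, htT⟩ := ht
  have hMv : 0 ≤ Mv := le_trans (abs_nonneg _) (hv 0 0 ⟨le_refl _, hT⟩)
  have hMw : 0 ≤ Mw := le_trans (abs_nonneg _) (hw 0 0 ⟨le_refl _, hT⟩)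
  set K := Mv ^ p * Mw ^ q with hK
  have hKnn : 0 ≤ K := mul_nonneg (Real.rpow_nonneg hMv p) (Real.rpow_nonneg hMw q)
  have hbound : ∀ y : ℝ, ∀ s ∈ Icc (0:ℝ) T,
      |v y s| ^ p * |w y s| ^ q ≤ K := by
    intro y s hs
    exact mul_le_mul (Real.rpow_le_rpow (abs_nonneg _) (hv y s hs) hp)
      (Real.rpow_le_rpow (abs_nonneg _) (hw y s hs) hq)
      (Real.rpow_nonneg (abs_nonneg _) q) (Real.rpow_nonneg hMv p)
  have hint : |∫ s in (0:ℝ)..t,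
      (|v (x + t - s) s| ^ p * |w (x + t - s) s| ^ q
        + |v (x - t + s) s| ^ p * |w (x - t + s) s| ^ q)| ≤ (2 * K) * |t - 0| := by
    rw [← Real.norm_eq_abs]
    apply intervalIntegral.norm_integral_le_of_norm_le_const
    intro s hs
    rw [uIoc_of_le ht0] at hs
    have hsT : s ∈ Icc (0:ℝ) T := ⟨le_of_lt hs.1, le_trans hs.2 htT⟩
    have h1 := hbound (x + t - s) s hsT
    have h2 := hbound (x - t + s) s hsT
    rw [Real.norm_eq_abs]
    calc |(|v (x + t - s) s| ^ p * |w (x + t - s) s| ^ q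
        + |v (x - t + s) s| ^ p * |w (x - t + s) s| ^ q)|
        ≤ |(|v (x + t - s) s| ^ p * |w (x + t - s) s| ^ q)|
          + |(|v (x - t + s) s| ^ p * |w (x - t + s) s| ^ q)| := abs_add_le _ _
      _ ≤ K + K := by
          refine add_le_add ?_ ?_ <;>
          · rw [abs_of_nonneg (mul_nonneg (Real.rpow_nonneg (abs_nonneg _) p)
              (Real.rpow_nonneg (abs_nonneg _) q))]
            assumption
      _ = 2 * K := by ring
  rw [abs_mul, abs_of_nonneg (by norm_num : (0:ℝ) ≤ 1/2)]
  have htabs : |t - 0| = t := by rw [sub_zero, abs_of_nonneg ht0]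
  calc (1/2 : ℝ) * |∫ s in (0:ℝ)..t,
        (|v (x + t - s) s| ^ p * |w (x + t - s) s| ^ q
          + |v (x - t + s) s| ^ p * |w (x - t + s) s| ^ q)|
      ≤ (1/2) * ((2 * K) * |t - 0|) := by
        apply mul_le_mul_of_nonneg_left hint (by norm_num)
    _ = K * t := by rw [htabs]; ring
    _ ≤ K * (T + R) := by
        apply mul_le_mul_of_nonneg_left _ hKnn
        linarith
    _ = 1 * Mv ^ p * Mw ^ q * (T + R) := by rw [hK]; ring
end

section
/- Let p > 1, f ∈ C₀²(R), g ∈ C₀¹(R), and suppose M := f'(x₀) + g(x₀) > 0 for some x₀ ∈ R. If u is a C² solution on R × [0,T] of u_tt − u_xx = |u_t + u_x|^{p−1}(u_t + u_x) with data u(·,0) = εf, u_t(·,0) = εg, then the function U(t) := (u_t + u_x)(x₀ − t, t) satisfies U(t) = Mε + ∫₀ᵗ |U(s)|^{p−1} U(s) ds for all t ∈ [0,T]. -/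
open Set

theorem characteristic_integral_equation (p ε T x₀ : ℝ) (hp : 1 < p) (hε : 0 < ε) (hT : 0 ≤ T)
    (f g : ℝ → ℝ) (hf : ContDiff ℝ 2 f) (hfc : HasCompactSupport f)
    (hg : ContDiff ℝ 1 g) (hgc : HasCompactSupport g)
    (M : ℝ) (hM : M = deriv f x₀ + g x₀) (hMpos : 0 < M)
    (u : ℝ → ℝ → ℝ) (hu : ContDiff ℝ 2 (Function.uncurry u))
    (hpde : ∀ x : ℝ, ∀ t ∈ Icc (0:ℝ) T,
      deriv (deriv (u x)) t - deriv (fun y => deriv (fun z => u z t) y) x =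
        |deriv (u x) t + deriv (fun y => u y t) x| ^ (p - 1) *
          (deriv (u x) t + deriv (fun y => u y t) x))
    (hdata0 : ∀ x : ℝ, u x 0 = ε * f x)
    (hdata1 : ∀ x : ℝ, deriv (u x) 0 = ε * g x)
    (U : ℝ → ℝ)
    (hU : ∀ t : ℝ, U t = deriv (u (x₀ - t)) t + deriv (fun y => u y t) (x₀ - t)) :
    ∀ t ∈ Icc (0:ℝ) T, U t = M * ε + ∫ s in (0:ℝ)..t, |U s| ^ (p - 1) * U s := by
  set F : ℝ × ℝ → ℝ := Function.uncurry u with hF_def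
  have hF : Differentiable ℝ F := hu.differentiable (by norm_num)
  have hF'cd : ContDiff ℝ 1 (fderiv ℝ F) := hu.fderiv_right (by norm_num)
  have hF' : Differentiable ℝ (fderiv ℝ F) := hF'cd.differentiable (by norm_num)
  have hA : ∀ x t : ℝ, HasDerivAt (u x) (fderiv ℝ F (x, t) (0, 1)) t := by
    intro x t
    have hc : HasDerivAt (fun s : ℝ => ((x, s) : ℝ × ℝ)) ((0 : ℝ), (1 : ℝ)) t :=
      (hasDerivAt_const t x).prodMk (hasDerivAt_id t)
    exact (hF (x, t)).hasFDerivAt.comp_hasDerivAt t hc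
  have hB : ∀ x t : ℝ, HasDerivAt (fun y => u y t) (fderiv ℝ F (x, t) (1, 0)) x := by
    intro x t
    have hc : HasDerivAt (fun y : ℝ => ((y, t) : ℝ × ℝ)) ((1 : ℝ), (0 : ℝ)) x :=
      (hasDerivAt_id x).prodMk (hasDerivAt_const x t)
    exact (hF (x, t)).hasFDerivAt.comp_hasDerivAt x hc
  have hsymm : ∀ q : ℝ × ℝ, ∀ v w : ℝ × ℝ,
      fderiv ℝ (fderiv ℝ F) q v w = fderiv ℝ (fderiv ℝ F) q w v :=
    fun q => second_derivative_symmetric (fun y => (hF y).hasFDerivAt) ((hF' q).hasFDerivAt)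
  have hC : ∀ (c : ℝ → ℝ × ℝ) (w : ℝ × ℝ) (t : ℝ) (v : ℝ × ℝ), HasDerivAt c w t →
      HasDerivAt (fun s => fderiv ℝ F (c s) v) (fderiv ℝ (fderiv ℝ F) (c t) w v) t := by
    intro c w t v hc
    have h1 : HasDerivAt (fun s => fderiv ℝ F (c s)) (fderiv ℝ (fderiv ℝ F) (c t) w) t :=
      (hF' (c t)).hasFDerivAt.comp_hasDerivAt t hc
    simpa using h1.clm_apply (hasDerivAt_const t v)
  have hUeq : ∀ t : ℝ, U t = fderiv ℝ F (x₀ - t, t) (1, 1) := by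
    intro t
    rw [hU t, (hA _ t).deriv, (hB (x₀ - t) t).deriv]
    have h2 : ((1:ℝ), (1:ℝ)) = ((0:ℝ),(1:ℝ)) + ((1:ℝ),(0:ℝ)) := by simp
    rw [h2, map_add]
  have hγ : ∀ t : ℝ, HasDerivAt (fun s : ℝ => ((x₀ - s, s) : ℝ × ℝ)) ((-1 : ℝ), (1 : ℝ)) t :=
    fun t => ((hasDerivAt_id t).const_sub x₀).prodMk (hasDerivAt_id t)
  have hUd : ∀ t : ℝ, HasDerivAt U (fderiv ℝ (fderiv ℝ F) (x₀ - t, t) (-1, 1) (1, 1)) t := by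
    intro t
    have h := hC (fun s : ℝ => ((x₀ - s, s) : ℝ × ℝ)) (-1, 1) t (1, 1) (hγ t)
    exact h.congr_of_eventuallyEq (Filter.Eventually.of_forall fun s => hUeq s)
  have hkey : ∀ t : ℝ, fderiv ℝ (fderiv ℝ F) (x₀ - t, t) (-1, 1) (1, 1)
      = fderiv ℝ (fderiv ℝ F) (x₀ - t, t) (0, 1) (0, 1)
        - fderiv ℝ (fderiv ℝ F) (x₀ - t, t) (1, 0) (1, 0) := by
    intro t
    have h1 : ((-1:ℝ), (1:ℝ)) = ((0:ℝ),(1:ℝ)) - ((1:ℝ),(0:ℝ)) := by simp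
    have h2 : ((1:ℝ), (1:ℝ)) = ((0:ℝ),(1:ℝ)) + ((1:ℝ),(0:ℝ)) := by simp
    rw [h1, h2, map_sub]
    simp only [ContinuousLinearMap.sub_apply, map_add]
    rw [hsymm (x₀ - t, t) (1,0) (0,1)]
    ring
  have hDtt : ∀ x t : ℝ, deriv (deriv (u x)) t = fderiv ℝ (fderiv ℝ F) (x,t) (0,1) (0,1) := by
    intro x t
    have h1 : deriv (u x) = fun s => fderiv ℝ F (x, s) (0,1) := funext fun s => (hA x s).deriv
    rw [h1]
    exact (hC (fun s => (x, s)) (0,1) t (0,1)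
      ((hasDerivAt_const t x).prodMk (hasDerivAt_id t))).deriv
  have hDxx : ∀ x t : ℝ, deriv (fun y => deriv (fun z => u z t) y) x
      = fderiv ℝ (fderiv ℝ F) (x,t) (1,0) (1,0) := by
    intro x t
    have h1 : (fun y => deriv (fun z => u z t) y) = fun y => fderiv ℝ F (y, t) (1,0) :=
      funext fun y => (hB y t).deriv
    rw [h1]
    exact (hC (fun y => (y, t)) (1,0) x (1,0)
      ((hasDerivAt_id x).prodMk (hasDerivAt_const x t))).deriv
  have hUd' : ∀ t ∈ Icc (0:ℝ) T, HasDerivAt U (|U t| ^ (p-1) * U t) t := by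
    intro t ht
    have h := hUd t
    rw [hkey t] at h
    have hp' := hpde (x₀ - t) t ht
    rw [hDtt, hDxx, ← hU t] at hp'
    exact hp' ▸ h
  have hUcont : Continuous U := continuous_iff_continuousAt.2 fun t => (hUd t).continuousAt
  have hgcont : Continuous (fun s => |U s| ^ (p-1) * U s) :=
    (hUcont.abs.rpow_const fun s => Or.inr (by linarith)).mul hUcont
  have hU0 : U 0 = M * ε := by
    have h2 : (fun y => u y 0) = fun y => ε * f y := funext hdata0
    rw [hU 0, sub_zero, hdata1 x₀, h2,
      deriv_const_mul ε ((hf.differentiable (by norm_num)) x₀), hM]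
    ring
  intro t ht
  obtain ⟨ht0, htT⟩ := ht
  have hFTC : ∫ s in (0:ℝ)..t, |U s| ^ (p-1) * U s = U t - U 0 := by
    apply intervalIntegral.integral_eq_sub_of_hasDerivAt
    · intro s hs
      rw [uIcc_of_le ht0] at hs
      exact hUd' s ⟨hs.1, hs.2.trans htT⟩
    · exact hgcont.intervalIntegrable 0 t
  rw [hFTC, hU0]; ring
end

section
/- Let p > 1, f ∈ C₀²(R), g ∈ C₀¹(R), and suppose f'(x₀) + g(x₀) ≠ 0 for some x₀ ∈ R. Then there exists C > 0 such that for every ε > 0, no classical C² solution of u_tt − u_xx = |u_t + u_x|^{p−1}(u_t + u_x) with data (εf, εg) exists on R × [0,T] whenever T > C ε^{−(p−1)}. -/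
open Set



lemma ode_blowup (p a T : ℝ) (hp : 1 < p) (ha : 0 < a)
    (hT : a ^ (1 - p) / (p - 1) < T) (V : ℝ → ℝ) (hV0 : V 0 = a)
    (hV : ∀ t ∈ Icc (0:ℝ) T, HasDerivAt V (|V t| ^ (p - 1) * V t) t) : False := by
  have hp1 : (0:ℝ) < p - 1 := by linarith
  have hT0 : 0 < T := lt_trans (div_pos (Real.rpow_pos_of_pos ha _) hp1) hT
  have hcont : ContinuousOn V (Icc 0 T) :=
    fun t ht => (hV t ht).continuousAt.continuousWithinAt
  -- positivity
  have hpos : ∀ t ∈ Icc (0:ℝ) T, a / 2 < V t := by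
    by_contra h
    push_neg at h
    obtain ⟨t₁, ht₁, hle⟩ := h
    set B := {t ∈ Icc (0:ℝ) T | V t ≤ a / 2} with hB
    have hBne : B.Nonempty := ⟨t₁, ht₁, hle⟩
    have hBclosed : IsClosed B := by
      have : B = Icc (0:ℝ) T ∩ V ⁻¹' Iic (a / 2) := by
        ext t; simp only [hB, mem_setOf_eq, mem_inter_iff, mem_preimage, mem_Iic]
      rw [this]
      exact hcont.preimage_isClosed_of_isClosed isClosed_Icc isClosed_Iic
    have hBbdd : BddBelow B := ⟨0, fun x hx => hx.1.1⟩
    have hbB : sInf B ∈ B := hBclosed.csInf_mem hBne hBbdd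
    set b := sInf B with hbdef
    have hbI : b ∈ Icc (0:ℝ) T := hbB.1
    have hb0 : 0 < b := by
      rcases lt_or_eq_of_le hbI.1 with h' | h'
      · exact h'
      · exfalso
        have := hbB.2
        rw [← h', hV0] at this
        linarith
    have hmono : StrictMonoOn V (Icc 0 b) := by
      apply strictMonoOn_of_deriv_pos (convex_Icc 0 b)
          (hcont.mono (Icc_subset_Icc le_rfl hbI.2))
      intro x hx
      rw [interior_Icc] at hx
      have hxT : x ∈ Icc (0:ℝ) T := ⟨hx.1.le, hx.2.le.trans hbI.2⟩
      have hxB : x ∉ B := fun hxB => absurd (csInf_le hBbdd hxB) (not_le.mpr hx.2)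
      have hVx : a / 2 < V x := by
        by_contra h''
        exact hxB ⟨hxT, not_lt.mp h''⟩
      have hVx0 : 0 < V x := lt_of_le_of_lt (by linarith) hVx
      rw [(hV x hxT).deriv]
      exact mul_pos (Real.rpow_pos_of_pos (abs_pos.mpr hVx0.ne') _) hVx0
    have : V 0 < V b := hmono ⟨le_rfl, hb0.le⟩ ⟨hb0.le, le_rfl⟩ hb0
    rw [hV0] at this
    have := hbB.2
    linarith
  have hVpos : ∀ t ∈ Icc (0:ℝ) T, 0 < V t :=
    fun t ht => lt_of_le_of_lt (by linarith) (hpos t ht)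
  -- the function ψ has zero derivative
  set ψ : ℝ → ℝ := fun t => V t ^ (1 - p) - (1 - p) * t with hψ
  have hψd : ∀ t ∈ Icc (0:ℝ) T, HasDerivAt ψ 0 t := by
    intro t ht
    have hVt : 0 < V t := hVpos t ht
    have h1 : HasDerivAt (fun s => V s ^ (1 - p))
        ((1 - p) * V t ^ (1 - p - 1) * (|V t| ^ (p - 1) * V t)) t :=
      (Real.hasDerivAt_rpow_const (Or.inl hVt.ne')).comp t (hV t ht)
    have h2 : HasDerivAt (fun s : ℝ => (1 - p) * s) (1 - p) t := by
      simpa using (hasDerivAt_id t).const_mul (1 - p)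
    have h3 := h1.sub h2
    have key : (1 - p) * V t ^ (1 - p - 1) * (|V t| ^ (p - 1) * V t) - (1 - p) = 0 := by
      rw [abs_of_pos hVt]
      have e1 : V t ^ (1 - p - 1) * (V t ^ (p - 1) * V t) = 1 := by
        rw [show V t ^ (1 - p - 1) * (V t ^ (p - 1) * V t)
              = V t ^ (1 - p - 1) * V t ^ (p - 1) * V t by ring,
          ← Real.rpow_add hVt, show 1 - p - 1 + (p - 1) = (-1 : ℝ) by ring,
          Real.rpow_neg_one]
        exact inv_mul_cancel₀ hVt.ne'
      rw [mul_assoc, e1]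
      ring
    rwa [key] at h3
  have hconst := constant_of_has_deriv_right_zero
    (f := ψ) (a := 0) (b := T)
    (fun t ht => (hψd t ht).continuousAt.continuousWithinAt)
    (fun t ht => (hψd t (Ico_subset_Icc_self ht)).hasDerivWithinAt)
    T (right_mem_Icc.mpr hT0.le)
  have hψ0 : ψ 0 = a ^ (1 - p) := by simp [hψ, hV0]
  have hψT : ψ T = V T ^ (1 - p) - (1 - p) * T := rfl
  have hlt : a ^ (1 - p) < (p - 1) * T := by
    rw [div_lt_iff₀ hp1] at hT
    linarith
  have hVT : 0 < V T ^ (1 - p) :=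
    Real.rpow_pos_of_pos (hVpos T (right_mem_Icc.mpr hT0.le)) _
  rw [hψT, hψ0] at hconst
  nlinarith


theorem blowup_special_model (p x₀ : ℝ) (hp : 1 < p)
    (f g : ℝ → ℝ) (hf : ContDiff ℝ 2 f) (hfc : HasCompactSupport f)
    (hg : ContDiff ℝ 1 g) (hgc : HasCompactSupport g)
    (hdata : deriv f x₀ + g x₀ ≠ 0) :
    ∃ C > (0:ℝ), ∀ ε > (0:ℝ), ∀ T : ℝ, T > C * ε ^ (-(p - 1)) →
      ¬ ∃ u : ℝ → ℝ → ℝ, ContDiff ℝ 2 (Function.uncurry u) ∧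
        (∀ x : ℝ, ∀ t ∈ Icc (0:ℝ) T,
          deriv (deriv (u x)) t - deriv (fun y => deriv (fun z => u z t) y) x =
            |deriv (u x) t + deriv (fun y => u y t) x| ^ (p - 1) *
              (deriv (u x) t + deriv (fun y => u y t) x)) ∧
        (∀ x : ℝ, u x 0 = ε * f x) ∧
        (∀ x : ℝ, deriv (u x) 0 = ε * g x) := by
  set M : ℝ := deriv f x₀ + g x₀ with hM
  have hM0 : 0 < |M| := abs_pos.mpr hdata
  refine ⟨|M| ^ (1 - p) / (p - 1), div_pos (Real.rpow_pos_of_pos hM0 _) (by linarith), ?_⟩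
  rintro ε hε T hTgt ⟨u, hu, hpde, hu0, hut0⟩
  set F : ℝ × ℝ → ℝ := Function.uncurry u with hF
  set Φ : ℝ × ℝ → (ℝ × ℝ →L[ℝ] ℝ) := fderiv ℝ F with hΦ
  have hΦc : ContDiff ℝ 1 Φ := hu.fderiv_right (by norm_num)
  have hFd : ∀ q : ℝ × ℝ, HasFDerivAt F (Φ q) q :=
    fun q => ((hu.differentiable two_ne_zero) q).hasFDerivAt
  have hΦd : ∀ q : ℝ × ℝ, HasFDerivAt Φ (fderiv ℝ Φ q) q :=
    fun q => ((hΦc.differentiable one_ne_zero) q).hasFDerivAt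
  have hsymm : ∀ (q v w : ℝ × ℝ), fderiv ℝ Φ q v w = fderiv ℝ Φ q w v :=
    fun q => second_derivative_symmetric hFd (hΦd q)
  -- first partial derivatives
  have h1 : ∀ x t : ℝ, HasDerivAt (u x) (Φ (x, t) (0, 1)) t := by
    intro x t
    have := (hFd (x, t)).comp_hasDerivAt t
      ((hasDerivAt_const t x).prodMk (hasDerivAt_id t))
    exact this
  have h2 : ∀ x t : ℝ, HasDerivAt (fun y => u y t) (Φ (x, t) (1, 0)) x := by
    intro x t
    have := (hFd (x, t)).comp_hasDerivAt x
      ((hasDerivAt_id x).prodMk (hasDerivAt_const x t))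
    exact this
  -- second partial derivatives
  have hΦt : ∀ (v : ℝ × ℝ) (x t : ℝ),
      HasDerivAt (fun s => Φ (x, s) v) (fderiv ℝ Φ (x, t) (0, 1) v) t := by
    intro v x t
    have hc : HasDerivAt (fun s => Φ (x, s)) (fderiv ℝ Φ (x, t) (0, 1)) t :=
      (hΦd (x, t)).comp_hasDerivAt t
        ((hasDerivAt_const t x).prodMk (hasDerivAt_id t))
    simpa using hc.clm_apply (hasDerivAt_const t v)
  have hΦx : ∀ (v : ℝ × ℝ) (x t : ℝ),
      HasDerivAt (fun y => Φ (y, t) v) (fderiv ℝ Φ (x, t) (1, 0) v) x := by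
    intro v x t
    have hc : HasDerivAt (fun y => Φ (y, t)) (fderiv ℝ Φ (x, t) (1, 0)) x :=
      (hΦd (x, t)).comp_hasDerivAt x
        ((hasDerivAt_id x).prodMk (hasDerivAt_const x t))
    simpa using hc.clm_apply (hasDerivAt_const x v)
  -- rewrite the PDE in terms of Φ
  have hpde' : ∀ x : ℝ, ∀ t ∈ Icc (0:ℝ) T,
      fderiv ℝ Φ (x, t) (0, 1) ((0:ℝ), (1:ℝ)) - fderiv ℝ Φ (x, t) (1, 0) ((1:ℝ), (0:ℝ)) =
        |Φ (x, t) (1, 1)| ^ (p - 1) * Φ (x, t) (1, 1) := by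
    intro x t ht
    have e1 : deriv (u x) t = Φ (x, t) (0, 1) := (h1 x t).deriv
    have e2 : deriv (fun y => u y t) x = Φ (x, t) (1, 0) := (h2 x t).deriv
    have e3 : deriv (deriv (u x)) t = fderiv ℝ Φ (x, t) (0, 1) ((0:ℝ), (1:ℝ)) := by
      have : deriv (u x) = fun s => Φ (x, s) ((0:ℝ), (1:ℝ)) := funext fun s => (h1 x s).deriv
      rw [this]
      exact (hΦt (0, 1) x t).deriv
    have e4 : deriv (fun y => deriv (fun z => u z t) y) x
        = fderiv ℝ Φ (x, t) (1, 0) ((1:ℝ), (0:ℝ)) := by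
      have : (fun y => deriv (fun z => u z t) y) = fun y => Φ (y, t) ((1:ℝ), (0:ℝ)) :=
        funext fun y => (h2 y t).deriv
      rw [this]
      exact (hΦx (1, 0) x t).deriv
    have e5 : Φ (x, t) ((1:ℝ), (1:ℝ)) = Φ (x, t) (0, 1) + Φ (x, t) (1, 0) := by
      rw [show ((1:ℝ), (1:ℝ)) = ((0:ℝ), (1:ℝ)) + ((1:ℝ), (0:ℝ)) by norm_num]
      exact (Φ (x, t)).map_add _ _
    have := hpde x t ht
    rw [e1, e2, e3, e4] at this
    rw [e5]
    exact this
  -- the function along the characteristic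
  set W : ℝ → ℝ := fun t => Φ (x₀ - t, t) ((1:ℝ), (1:ℝ)) with hW
  have hWd : ∀ t ∈ Icc (0:ℝ) T, HasDerivAt W (|W t| ^ (p - 1) * W t) t := by
    intro t ht
    have hγ : HasDerivAt (fun s : ℝ => (x₀ - s, s)) ((-1 : ℝ), (1 : ℝ)) t :=
      (((hasDerivAt_id t).const_sub x₀).prodMk (hasDerivAt_id t))
    have hc := HasFDerivAt.comp_hasDerivAt (l := Φ) (f := fun s : ℝ => (x₀ - s, s)) t
      (hΦd (x₀ - t, t)) hγ
    have hWt : HasDerivAt W (fderiv ℝ Φ (x₀ - t, t) (-1, 1) ((1:ℝ), (1:ℝ))) t := by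
      simpa [hW, Function.comp] using hc.clm_apply (hasDerivAt_const t ((1:ℝ), (1:ℝ)))
    have key : fderiv ℝ Φ (x₀ - t, t) ((-1:ℝ), (1:ℝ)) ((1:ℝ), (1:ℝ))
        = |W t| ^ (p - 1) * W t := by
      set B := fderiv ℝ Φ (x₀ - t, t) with hBdef
      have d1 : ((-1:ℝ), (1:ℝ)) = ((0:ℝ), (1:ℝ)) - ((1:ℝ), (0:ℝ)) := by norm_num
      have d2 : ((1:ℝ), (1:ℝ)) = ((0:ℝ), (1:ℝ)) + ((1:ℝ), (0:ℝ)) := by norm_num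
      rw [d1, d2, map_sub]
      simp only [ContinuousLinearMap.sub_apply, map_add]
      have hs := hsymm (x₀ - t, t) ((0:ℝ), (1:ℝ)) ((1:ℝ), (0:ℝ))
      rw [← hBdef] at hs
      rw [hs]
      have := hpde' (x₀ - t) t ht
      rw [← hBdef] at this
      rw [hW]
      linarith [this]
    rwa [key] at hWt
  -- initial value
  have hW0 : W 0 = ε * M := by
    have e1 : Φ (x₀, 0) ((0:ℝ), (1:ℝ)) = ε * g x₀ := by
      rw [← (h1 x₀ 0).deriv]; exact hut0 x₀
    have e2 : Φ (x₀, 0) ((1:ℝ), (0:ℝ)) = ε * deriv f x₀ := by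
      rw [← (h2 x₀ 0).deriv]
      have : (fun y => u y 0) = fun y => ε * f y := funext fun y => hu0 y
      rw [this, deriv_const_mul _ ((hf.differentiable two_ne_zero) x₀)]
    have e5 : Φ (x₀, 0) ((1:ℝ), (1:ℝ)) = Φ (x₀, 0) (0, 1) + Φ (x₀, 0) (1, 0) := by
      rw [show ((1:ℝ), (1:ℝ)) = ((0:ℝ), (1:ℝ)) + ((1:ℝ), (0:ℝ)) by norm_num]
      exact (Φ (x₀, 0)).map_add _ _
    have : W 0 = Φ (x₀, 0) ((1:ℝ), (1:ℝ)) := by simp [hW]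
    rw [this, e5, e1, e2, hM]
    ring
  -- normalize sign
  set V : ℝ → ℝ := fun t => if 0 < M then W t else -W t with hV
  have hV0 : V 0 = |M| * ε := by
    rcases lt_or_ge 0 M with h | h
    · simp [hV, h, hW0, abs_of_pos h]; ring
    · have : ¬ (0 < M) := not_lt.mpr h
      have hMneg : M < 0 := lt_of_le_of_ne h (hdata)
      simp [hV, this, hW0, abs_of_neg hMneg]; ring
  have hVd : ∀ t ∈ Icc (0:ℝ) T, HasDerivAt V (|V t| ^ (p - 1) * V t) t := by
    intro t ht
    rcases lt_or_ge 0 M with h | h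
    · have : V = W := by funext s; simp [hV, h]
      rw [this]; exact hWd t ht
    · have hnot : ¬ (0 < M) := not_lt.mpr h
      have : V = fun s => -W s := by funext s; simp [hV, hnot]
      rw [this]
      have := (hWd t ht).fun_neg
      simpa [abs_neg, mul_neg, neg_mul] using this
  -- apply the ODE blow-up lemma
  have ha : (0:ℝ) < |M| * ε := mul_pos hM0 hε
  have hTbig : (|M| * ε) ^ (1 - p) / (p - 1) < T := by
    have : (|M| * ε) ^ (1 - p) = |M| ^ (1 - p) * ε ^ (1 - p) :=
      Real.mul_rpow (abs_nonneg _) hε.le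
    rw [this]
    have hexp : ε ^ (-(p - 1)) = ε ^ (1 - p) := by norm_num
    rw [hexp] at hTgt
    calc |M| ^ (1 - p) * ε ^ (1 - p) / (p - 1)
        = |M| ^ (1 - p) / (p - 1) * ε ^ (1 - p) := by ring
      _ < T := hTgt
  exact ode_blowup p (|M| * ε) T hp ha hTbig V hV0 hVd
end
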